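/- Every isolated point of the spectrum of a bounded totally paranormal operator is an eigenvalue. -/

import Mathlib

/-!
Put `S = T - μ • 1`, so that `0` is an isolated point of `σ(S)`, and let `P = ∮ R(z) dz` be the
integral of the resolvent over a small circle around `0`. The moments `S ^ n P = ∮ z ^ n R(z) dz`
are `O(ρ ^ n)` for every small radius `ρ`, while paranormality makes `n ↦ ‖S ^ n x‖` log-convex,
so `‖S x‖ ^ (n + 1) ≤ ‖S ^ (n + 1) x‖ ‖x‖ ^ n`. Together they give `‖S P y‖ ≤ ρ ‖P y‖` for all
small `ρ`, i.e. `S P = 0`. If `S` were injective then `P = 0`, and `∮ z⁻¹ R(z) dz` would be a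
two-sided inverse of `S` up to the factor `-2πi`, contradicting `0 ∈ σ(S)`.
-/

open Metric Filter Topology Set

theorem ContinuousLinearMap.circleIntegral_comp_comm {E F : Type*} [NormedAddCommGroup E]
    [NormedSpace ℂ E] [CompleteSpace E] [NormedAddCommGroup F] [NormedSpace ℂ F]
    [CompleteSpace F] (L : E →L[ℂ] F) {f : ℂ → E} {c : ℂ} {R : ℝ} (hf : CircleIntegrable f c R) :
    ∮ z in C(c, R), L (f z) = L (∮ z in C(c, R), f z) := by
  simp only [circleIntegral, ← L.intervalIntegral_comp_comm hf.out, L.map_smul]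

theorem circleIntegral.integral_pow_eq_zero (n : ℕ) (ρ : ℝ) : ∮ z in C(0, ρ), z ^ n = 0 := by
  simpa using circleIntegral.integral_sub_zpow_of_ne (n := (n : ℤ)) (by omega) 0 0 ρ

namespace spectrum

section Algebra

variable {R A : Type*} [CommRing R] [Ring A] [Algebra R A] {a : A}

theorem mem_sub_smul_one_iff {z μ : R} : z ∈ spectrum R (a - μ • 1) ↔ z + μ ∈ spectrum R a := by
  rw [add_mem_iff, ← Algebra.algebraMap_eq_smul_one, neg_add_eq_sub]

theorem mul_resolvent {z : R} (hz : z ∈ resolventSet R a) :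
    a * resolvent a z = z • resolvent a z - 1 := by
  have h : (algebraMap R A z - a) * resolvent a z = 1 := by
    rw [resolvent_eq hz]; exact hz.mul_val_inv
  rw [Algebra.algebraMap_eq_smul_one, sub_mul, smul_one_mul] at h
  rw [← h]; abel

theorem resolvent_mul {z : R} (hz : z ∈ resolventSet R a) :
    resolvent a z * a = z • resolvent a z - 1 := by
  have h : resolvent a z * (algebraMap R A z - a) = 1 := by
    rw [resolvent_eq hz]; exact hz.val_inv_mul
  rw [Algebra.algebraMap_eq_smul_one, mul_sub, mul_smul_one] at h
  rw [← h]; abel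

end Algebra

variable {A : Type*} [NormedRing A] [NormedAlgebra ℂ A] [CompleteSpace A] {a : A} {ρ : ℝ}

theorem continuousOn_resolvent {s : Set ℂ} (hs : s ⊆ resolventSet ℂ a) :
    ContinuousOn (resolvent a) s := fun _ hz =>
  (hasDerivAt_resolvent_const_left (hs hz)).continuousAt.continuousWithinAt

theorem circleIntegrable_smul_resolvent (hρ : 0 ≤ ρ) (ha : sphere (0 : ℂ) ρ ⊆ resolventSet ℂ a)
    {g : ℂ → ℂ} (hg : ContinuousOn g (sphere 0 ρ)) :
    CircleIntegrable (fun z => g z • resolvent a z) 0 ρ :=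
  (hg.smul (continuousOn_resolvent ha)).circleIntegrable hρ

theorem circleIntegral_mul_smul_resolvent_sub (hρ : 0 ≤ ρ)
    (ha : sphere (0 : ℂ) ρ ⊆ resolventSet ℂ a)
    {g : ℂ → ℂ} (hg : ContinuousOn g (sphere 0 ρ)) :
    ∮ z in C(0, ρ), ((z * g z) • resolvent a z - g z • 1) =
      (∮ z in C(0, ρ), (z * g z) • resolvent a z) - (∮ z in C(0, ρ), g z) • 1 := by
  rw [circleIntegral.integral_sub (f := fun z => (z * g z) • resolvent a z)
    (g := fun z => g z • (1 : A)) (circleIntegrable_smul_resolvent hρ ha (continuousOn_id.mul hg))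
    ((hg.smul continuousOn_const).circleIntegrable hρ), circleIntegral.integral_smul_const]

theorem mul_circleIntegral_smul_resolvent (hρ : 0 ≤ ρ) (ha : sphere (0 : ℂ) ρ ⊆ resolventSet ℂ a)
    {g : ℂ → ℂ} (hg : ContinuousOn g (sphere 0 ρ)) :
    a * (∮ z in C(0, ρ), g z • resolvent a z) =
      (∮ z in C(0, ρ), (z * g z) • resolvent a z) - (∮ z in C(0, ρ), g z) • 1 := by
  rw [← circleIntegral_mul_smul_resolvent_sub hρ ha hg, ← ContinuousLinearMap.mul_apply' ℂ A a,
    ← ContinuousLinearMap.circleIntegral_comp_comm _ (circleIntegrable_smul_resolvent hρ ha hg)]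
  refine circleIntegral.integral_congr hρ fun z hz => ?_
  simp only [ContinuousLinearMap.mul_apply', mul_smul_comm, mul_resolvent (ha hz), smul_sub,
    smul_smul, mul_comm z]

theorem circleIntegral_smul_resolvent_mul (hρ : 0 ≤ ρ) (ha : sphere (0 : ℂ) ρ ⊆ resolventSet ℂ a)
    {g : ℂ → ℂ} (hg : ContinuousOn g (sphere 0 ρ)) :
    (∮ z in C(0, ρ), g z • resolvent a z) * a =
      (∮ z in C(0, ρ), (z * g z) • resolvent a z) - (∮ z in C(0, ρ), g z) • 1 := by
  rw [← circleIntegral_mul_smul_resolvent_sub hρ ha hg,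
    ← ContinuousLinearMap.mul_apply' ℂ A _ a, ← ContinuousLinearMap.flip_apply,
    ← ContinuousLinearMap.circleIntegral_comp_comm _ (circleIntegrable_smul_resolvent hρ ha hg)]
  refine circleIntegral.integral_congr hρ fun z hz => ?_
  simp only [ContinuousLinearMap.flip_apply, ContinuousLinearMap.mul_apply', smul_mul_assoc,
    resolvent_mul (ha hz), smul_sub, smul_smul, mul_comm z]

theorem pow_mul_circleIntegral_resolvent (hρ : 0 ≤ ρ) (ha : sphere (0 : ℂ) ρ ⊆ resolventSet ℂ a)
    (n : ℕ) : a ^ n * ∮ z in C(0, ρ), resolvent a z = ∮ z in C(0, ρ), z ^ n • resolvent a z := by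
  induction n with
  | zero => simp
  | succ n ih =>
    rw [pow_succ', mul_assoc, ih, mul_circleIntegral_smul_resolvent hρ ha
      (continuous_pow n).continuousOn, circleIntegral.integral_pow_eq_zero, zero_smul, sub_zero]
    simp only [← pow_succ']

theorem exists_norm_pow_mul_circleIntegral_resolvent_le (hρ : 0 ≤ ρ)
    (ha : sphere (0 : ℂ) ρ ⊆ resolventSet ℂ a) :
    ∃ C, ∀ n : ℕ, ‖a ^ n * ∮ z in C(0, ρ), resolvent a z‖ ≤ C * ρ ^ n := by
  obtain ⟨M, hM⟩ := (isCompact_sphere (0 : ℂ) ρ).exists_bound_of_continuousOn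
    (continuousOn_resolvent ha)
  refine ⟨2 * Real.pi * ρ * M, fun n => ?_⟩
  rw [pow_mul_circleIntegral_resolvent hρ ha]
  calc ‖∮ z in C(0, ρ), z ^ n • resolvent a z‖ ≤ 2 * Real.pi * ρ * (ρ ^ n * M) :=
        circleIntegral.norm_integral_le_of_norm_le_const hρ fun z hz => by
          rw [norm_smul, norm_pow, mem_sphere_zero_iff_norm.mp hz]
          exact mul_le_mul_of_nonneg_left (hM z hz) (by positivity)
    _ = 2 * Real.pi * ρ * M * ρ ^ n := by ring

theorem isUnit_of_circleIntegral_resolvent_eq_zero (hρ : 0 < ρ)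
    (ha : sphere (0 : ℂ) ρ ⊆ resolventSet ℂ a) (h : ∮ z in C(0, ρ), resolvent a z = 0) :
    IsUnit a := by
  have hinv : ContinuousOn (fun z : ℂ => z⁻¹) (sphere 0 ρ) :=
    continuousOn_inv₀.mono fun z hz => ne_of_mem_sphere hz hρ.ne'
  have hcancel : ∮ z in C(0, ρ), (z * z⁻¹) • resolvent a z = 0 := by
    rw [← h]
    refine circleIntegral.integral_congr hρ.le fun z hz => ?_
    simp [mul_inv_cancel₀ (ne_of_mem_sphere hz hρ.ne')]
  have hB : ∮ z in C(0, ρ), z⁻¹ = 2 * Real.pi * Complex.I := by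
    simpa using circleIntegral.integral_sub_center_inv 0 hρ.ne'
  have h2πi : (2 * Real.pi * Complex.I : ℂ) ≠ 0 := by simp [Real.pi_ne_zero]
  set B := ∮ z in C(0, ρ), z⁻¹ • resolvent a z
  refine isUnit_iff_exists.mpr ⟨-(2 * Real.pi * Complex.I)⁻¹ • B, ?_, ?_⟩
  · rw [mul_smul_comm, mul_circleIntegral_smul_resolvent hρ.le ha hinv, hcancel, hB, zero_sub,
      smul_neg, smul_smul, neg_mul, inv_mul_cancel₀ h2πi, neg_one_smul, neg_neg]
  · rw [smul_mul_assoc, circleIntegral_smul_resolvent_mul hρ.le ha hinv, hcancel, hB, zero_sub,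
      smul_neg, smul_smul, neg_mul, inv_mul_cancel₀ h2πi, neg_one_smul, neg_neg]

theorem circleIntegral_resolvent_eq_of_le {ρ₁ ρ₂ : ℝ} (h₀ : 0 < ρ₁) (hle : ρ₁ ≤ ρ₂)
    (ha : closedBall (0 : ℂ) ρ₂ \ ball 0 ρ₁ ⊆ resolventSet ℂ a) :
    ∮ z in C(0, ρ₂), resolvent a z = ∮ z in C(0, ρ₁), resolvent a z :=
  Complex.circleIntegral_eq_of_differentiable_on_annulus_off_countable h₀ hle countable_empty
    (continuousOn_resolvent ha) fun _ hz =>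
      (hasDerivAt_resolvent_const_left (ha ⟨ball_subset_closedBall hz.1.1,
        fun h => hz.1.2 (ball_subset_closedBall h)⟩)).differentiableAt

theorem circleIntegral_resolvent_eq {r ρ₁ ρ₂ : ℝ} (ha : ball (0 : ℂ) r \ {0} ⊆ resolventSet ℂ a)
    (h₁ : ρ₁ ∈ Ioo 0 r) (h₂ : ρ₂ ∈ Ioo 0 r) :
    ∮ z in C(0, ρ₁), resolvent a z = ∮ z in C(0, ρ₂), resolvent a z := by
  wlog hle : ρ₁ ≤ ρ₂ generalizing ρ₁ ρ₂
  · exact (this h₂ h₁ (le_of_not_ge hle)).symm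
  refine (circleIntegral_resolvent_eq_of_le h₁.1 hle fun z hz => ha ⟨?_, ?_⟩).symm
  · exact closedBall_subset_ball h₂.2 hz.1
  · rintro rfl
    exact hz.2 (mem_ball_self h₁.1)

end spectrum

section LogConvex

variable {a : ℕ → ℝ}

theorem mul_le_mul_of_sq_le_mul (ha : ∀ k, 0 ≤ a k) (h : ∀ k, a (k + 1) ^ 2 ≤ a (k + 2) * a k)
    (n : ℕ) : a n * a 1 ≤ a (n + 1) * a 0 := by
  induction n with
  | zero => rw [mul_comm]
  | succ n ih =>
    rcases (ha (n + 1)).eq_or_lt with hz | hpos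
    · rw [← hz, zero_mul]
      exact mul_nonneg (ha _) (ha _)
    · refine le_of_mul_le_mul_left ?_ hpos
      calc a (n + 1) * (a (n + 1) * a 1) = a (n + 1) ^ 2 * a 1 := by ring
        _ ≤ a (n + 2) * a n * a 1 := mul_le_mul_of_nonneg_right (h n) (ha 1)
        _ = a (n + 2) * (a n * a 1) := by ring
        _ ≤ a (n + 2) * (a (n + 1) * a 0) := mul_le_mul_of_nonneg_left ih (ha _)
        _ = a (n + 1) * (a (n + 2) * a 0) := by ring

theorem pow_le_mul_pow_of_sq_le_mul (ha : ∀ k, 0 ≤ a k)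
    (h : ∀ k, a (k + 1) ^ 2 ≤ a (k + 2) * a k) (n : ℕ) : a 1 ^ (n + 1) ≤ a (n + 1) * a 0 ^ n := by
  induction n with
  | zero => simp
  | succ n ih =>
    calc a 1 ^ (n + 2) = a 1 ^ (n + 1) * a 1 := pow_succ _ _
      _ ≤ a (n + 1) * a 0 ^ n * a 1 := mul_le_mul_of_nonneg_right ih (ha 1)
      _ = a (n + 1) * a 1 * a 0 ^ n := by ring
      _ ≤ a (n + 2) * a 0 * a 0 ^ n :=
        mul_le_mul_of_nonneg_right (mul_le_mul_of_sq_le_mul ha h (n + 1)) (pow_nonneg (ha 0) n)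
      _ = a (n + 2) * a 0 ^ (n + 1) := by ring

end LogConvex

theorem le_of_forall_pow_succ_le_mul_pow {t s K : ℝ} (hs : 0 ≤ s)
    (h : ∀ n : ℕ, t ^ (n + 1) ≤ K * s ^ n) : t ≤ s := by
  by_contra! hst
  have ht : 0 < t := hs.trans_lt hst
  have hbound : ∀ n : ℕ, t ≤ K * (s / t) ^ n := fun n => by
    rw [div_pow, ← mul_div_assoc, le_div_iff₀ (pow_pos ht n), ← pow_succ']
    exact h n
  have hlim : Tendsto (fun n : ℕ => K * (s / t) ^ n) atTop (𝓝 (K * 0)) :=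
    (tendsto_pow_atTop_nhds_zero_of_lt_one (div_nonneg hs ht.le)
      ((div_lt_one ht).mpr hst)).const_mul K
  exact ht.not_ge (by simpa using ge_of_tendsto' hlim hbound)

section Paranormal

variable {𝕜 E : Type*} [NormedField 𝕜] [SeminormedAddCommGroup E] [NormedSpace 𝕜 E]

def IsParanormal (S : E →L[𝕜] E) : Prop :=
  ∀ x, ‖S x‖ ^ 2 ≤ ‖S (S x)‖ * ‖x‖

variable {S : E →L[𝕜] E}

theorem IsParanormal.pow_le (hS : IsParanormal S) (x : E) (n : ℕ) :
    ‖S x‖ ^ (n + 1) ≤ ‖(S ^ (n + 1)) x‖ * ‖x‖ ^ n := by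
  simpa using pow_le_mul_pow_of_sq_le_mul (a := fun k => ‖(S ^ k) x‖) (fun _ => norm_nonneg _)
    (fun k => by simpa only [pow_succ', mul_apply_eq_comp] using hS ((S ^ k) x)) n

theorem IsParanormal.norm_apply_le (hS : IsParanormal S) {x : E} {C ρ : ℝ} (hρ : 0 ≤ ρ)
    (hC : ∀ n : ℕ, ‖(S ^ n) x‖ ≤ C * ρ ^ n) : ‖S x‖ ≤ ρ * ‖x‖ :=
  le_of_forall_pow_succ_le_mul_pow (by positivity) fun n =>
    calc ‖S x‖ ^ (n + 1) ≤ ‖(S ^ (n + 1)) x‖ * ‖x‖ ^ n := hS.pow_le x n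
      _ ≤ C * ρ ^ (n + 1) * ‖x‖ ^ n := mul_le_mul_of_nonneg_right (hC _) (by positivity)
      _ = C * ρ * (ρ * ‖x‖) ^ n := by ring

end Paranormal

theorem Metric.sphere_subset_ball_diff_singleton {X : Type*} [PseudoMetricSpace X] {x : X}
    {ρ r : ℝ} (hρ : ρ ∈ Ioo 0 r) : sphere x ρ ⊆ ball x r \ {x} := fun _ hz =>
  ⟨sphere_subset_ball hρ.2 hz, fun h => hρ.1.ne (by rwa [h, mem_sphere, dist_self] at hz)⟩

theorem IsParanormal.mul_circleIntegral_resolvent_eq_zero {H : Type*} [NormedAddCommGroup H]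
    [NormedSpace ℂ H] [CompleteSpace H] {S : H →L[ℂ] H} (hS : IsParanormal S) {r ρ : ℝ}
    (hr : ball (0 : ℂ) r \ {0} ⊆ resolventSet ℂ S) (hρ : ρ ∈ Ioo 0 r) :
    S * ∮ z in C(0, ρ), resolvent S z = 0 := by
  ext y
  obtain ⟨x, hx⟩ : ∃ x, x = (∮ z in C(0, ρ), resolvent S z) y := ⟨_, rfl⟩
  have hsmall : ∀ σ ∈ Ioo 0 r, ‖S x‖ ≤ σ * ‖x‖ := by
    intro σ hσ
    have hsphere := (sphere_subset_ball_diff_singleton hσ).trans hr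
    obtain ⟨C, hC⟩ :=
      spectrum.exists_norm_pow_mul_circleIntegral_resolvent_le hσ.1.le hsphere
    refine hS.norm_apply_le hσ.1.le (C := C * ‖y‖) fun n => ?_
    calc ‖(S ^ n) x‖ = ‖(S ^ n * ∮ z in C(0, σ), resolvent S z) y‖ := by
          rw [hx, spectrum.circleIntegral_resolvent_eq hr hρ hσ]; rfl
      _ ≤ C * σ ^ n * ‖y‖ := ((S ^ n * _).le_opNorm y).trans
          (mul_le_mul_of_nonneg_right (hC n) (norm_nonneg y))
      _ = C * ‖y‖ * σ ^ n := by ring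
  have hlim : Tendsto (fun σ : ℝ => σ * ‖x‖) (𝓝[>] 0) (𝓝 0) := by
    simpa using (tendsto_id.mul_const ‖x‖).mono_left (nhdsWithin_le_nhds (a := (0 : ℝ)))
  have hSx : ‖S x‖ ≤ 0 :=
    ge_of_tendsto hlim (eventually_of_mem (Ioo_mem_nhdsGT (hρ.1.trans hρ.2)) hsmall)
  simpa [hx] using hSx

theorem stmt_12 {H : Type*} [NormedAddCommGroup H] [InnerProductSpace ℂ H]
    [CompleteSpace H] (T : H →L[ℂ] H)
    (hT : ∀ (lam : ℂ) (x : H),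
      ‖(T - lam • 1) x‖ ^ 2 ≤ ‖((T - lam • 1) ∘L (T - lam • 1)) x‖ * ‖x‖)
    (μ : ℂ) (hμ : μ ∈ spectrum ℂ T)
    (hiso : ∃ r > 0, Metric.ball μ r ∩ spectrum ℂ T = {μ}) :
    LinearMap.ker ((T - μ • 1 : H →L[ℂ] H) : H →ₗ[ℂ] H) ≠ ⊥ := by
  obtain ⟨r, hr, hball⟩ := hiso
  set S := T - μ • 1
  have hS : IsParanormal S := hT μ
  have hS0 : (0 : ℂ) ∈ spectrum ℂ S := spectrum.mem_sub_smul_one_iff.mpr (by simpa using hμ)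
  have hres : ball (0 : ℂ) r \ {0} ⊆ resolventSet ℂ S := by
    rintro z ⟨hz, hz0⟩
    refine spectrum.mem_resolventSet_iff.mpr (spectrum.notMem_iff.mp fun hzS => hz0 ?_)
    have hzμ : z + μ ∈ ball μ r ∩ spectrum ℂ T :=
      ⟨by simpa [dist_eq_norm] using hz, spectrum.mem_sub_smul_one_iff.mp hzS⟩
    simpa [hball] using hzμ
  have hρ : r / 2 ∈ Ioo 0 r := ⟨by linarith, by linarith⟩
  intro hker
  have hP : ∮ z in C(0, r / 2), resolvent S z = 0 := by
    ext y
    exact LinearMap.ker_eq_bot.mp hker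
      (by simpa using congr($(hS.mul_circleIntegral_resolvent_eq_zero hres hρ) y))
  exact spectrum.zero_notMem ℂ (spectrum.isUnit_of_circleIntegral_resolvent_eq_zero hρ.1
    ((sphere_subset_ball_diff_singleton hρ).trans hres) hP) hS0
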